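/- arXiv:2410.21552 — 4 statements merged into one kernel-verified Lean document; each statement's English description precedes it below -/
import Mathlib

section
/- Assume the abc conjecture: for every real ε > 0 there exists a real constant C_ε > 0 such that for all coprime positive integers a and b one has a + b < C_ε · rad(a·b·(a+b))^{1+ε}. Then for all positive integers A, B, C and all real numbers F, Q, M with F < 1, the set of triples (X, Y, Z) of positive integers satisfying all of the following is finite: (i) A·X + B·Y = C·Z; (ii) gcd(X,Y)/rad(gcd(X,Y)) ≤ Q; (iii) there exist representations of X, Y, Z as products of positive integers, of degrees n_X, n_Y, n_Z, with bases b_X, b_Y, b_Z and spreads s_X, s_Y, s_Z, such that s_X²/b_X ≤ M, s_Y²/b_Y ≤ M, s_Z²/b_Z ≤ M and (1+s_X)/n_X + (1+s_Y)/n_Y + (1+s_Z)/n_Z ≤ F. -/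
/-- The radical of a natural number: the product of its distinct prime divisors. -/
def rad (n : ℕ) : ℕ := ∏ p ∈ n.primeFactors, p

/-- `IsProductRep X d b s` : `X` admits a representation as a product of `d` positive
integers with base (minimum) `b` and spread (max − min) `s`. -/
def IsProductRep (X d b s : ℕ) : Prop :=
  ∃ f : Fin d → ℕ, (∀ i, 0 < f i) ∧ (∏ i, f i) = X ∧
    (∀ i, b ≤ f i ∧ f i ≤ b + s) ∧ (∃ i, f i = b) ∧ (∃ i, f i = b + s)

/-!
A product representation of `X` of degree `n`, base `b` and spread `s` has at most `s + 1`
distinct factors, each at most `b + s ≤ b e^{s/b}`, and `b ^ n ≤ X`; hence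
`rad X ≤ e^{2s²/b} X^{(1+s)/n}`, so the hypotheses give `rad X · rad Y · rad Z ≤ e^{6M} H^F`
for `H = C Z`. Writing `X = x D`, `Y = y D` with `D = gcd(X, Y)` and dividing `A x`, `B y` by
their gcd `g`, which divides `A B` because `x, y` are coprime, yields a coprime abc triple
`a + b` with `H ≤ (a + b) A B D` and
`rad(ab(a+b)) · rad D ≤ rad(ABC) · rad X · rad Y · rad Z`.
Since `D ≤ Q rad D`, the abc conjecture with `ε = 1 - F` gives `H ≪ H^{F(2-F)}`, and
`F(2-F) < 1` bounds `H ≥ X, Y, Z`.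
-/

open UniqueFactorizationMonoid Real

theorem rad_eq_radical : rad = radical :=
  funext fun _ => Nat.radical_eq_prod_primeFactors.symm

theorem Nat.Coprime.radical_mul_radical_mul_radical_dvd {d x y : ℕ} (h : x.Coprime y)
    (hd : d ≠ 0) (hx : x ≠ 0) (hy : y ≠ 0) :
    radical x * radical y * radical d ∣ radical (x * d) * radical (y * d) := by
  classical
  simp only [Nat.radical_eq_prod_primeFactors, Nat.primeFactors_mul hx hd,
    Nat.primeFactors_mul hy hd]
  rw [← Finset.prod_union h.disjoint_primeFactors,
    ← Finset.prod_union_inter (s₁ := x.primeFactors ∪ d.primeFactors)]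
  exact mul_dvd_mul
    (Finset.prod_dvd_prod_of_subset _ _ _ (Finset.union_subset_union
      Finset.subset_union_left Finset.subset_union_left))
    (Finset.prod_dvd_prod_of_subset _ _ _ (Finset.subset_inter
      Finset.subset_union_right Finset.subset_union_right))

theorem exists_coprime_triple {A B C X Y Z : ℕ} (hA : 0 < A) (hB : 0 < B) (hX : 0 < X)
    (hY : 0 < Y) (h : A * X + B * Y = C * Z) :
    ∃ a b : ℕ, 0 < a ∧ 0 < b ∧ a.Coprime b ∧ C * Z ≤ (a + b) * (A * B * X.gcd Y) ∧
      radical (a * b * (a + b)) * radical (X.gcd Y) ∣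
        radical (A * B * C) * (radical X * radical Y * radical Z) := by
  obtain ⟨x, y, hxy, hXx, hYy⟩ := Nat.exists_coprime X Y
  set D := X.gcd Y
  obtain ⟨a, b, hab, hax, hby⟩ := Nat.exists_coprime (A * x) (B * y)
  set g := (A * x).gcd (B * y)
  have hx : 0 < x := Nat.pos_of_mul_pos_right (hXx ▸ hX)
  have hy : 0 < y := Nat.pos_of_mul_pos_right (hYy ▸ hY)
  have hD : 0 < D := Nat.pos_of_mul_pos_left (hXx ▸ hX)
  have hgAB : g ∣ A * B := by
    have : g ∣ A * B * x.gcd y := by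
      rw [← Nat.gcd_mul_left]
      exact Nat.dvd_gcd ((Nat.gcd_dvd_left _ _).trans (Dvd.intro_left B (by ring)))
        ((Nat.gcd_dvd_right _ _).trans (Dvd.intro_left A (by ring)))
    rwa [hxy.gcd_eq_one, mul_one] at this
  have hg : 0 < g := Nat.pos_of_dvd_of_pos hgAB (Nat.mul_pos hA hB)
  have hCZ : C * Z = (a + b) * g * D := by
    rw [← h, hXx, hYy, ← mul_assoc, ← mul_assoc, hax, hby]
    ring
  have ha : 0 < a := Nat.pos_of_mul_pos_right (hax ▸ Nat.mul_pos hA hx)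
  have hb : 0 < b := Nat.pos_of_mul_pos_right (hby ▸ Nat.mul_pos hB hy)
  refine ⟨a, b, ha, hb, hab, ?_, ?_⟩
  · rw [hCZ, mul_assoc]
    exact Nat.mul_le_mul_left _ (Nat.mul_le_mul_right _ (Nat.le_of_dvd (by positivity) hgAB))
  · have hCZpos : 0 < C * Z := hCZ ▸ by positivity
    have hC : 0 < C := Nat.pos_of_mul_pos_right hCZpos
    have hZ : 0 < Z := Nat.pos_of_mul_pos_left hCZpos
    have hdvd : a * b * (a + b) ∣ A * B * C * (x * y * Z) := by
      rw [show A * B * C * (x * y * Z) = A * x * (B * y) * (C * Z) by ring]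
      exact mul_dvd_mul (mul_dvd_mul (Dvd.intro g hax.symm) (Dvd.intro g hby.symm))
        (Dvd.intro (g * D) (hCZ.trans (mul_assoc _ _ _)).symm)
    calc radical (a * b * (a + b)) * radical D
        ∣ radical (A * B * C) * (radical x * radical y * radical Z) * radical D := by
          refine mul_dvd_mul_right ((radical_dvd_radical hdvd (by positivity)).trans ?_) _
          exact radical_mul_dvd.trans
            (mul_dvd_mul_left _ (radical_mul_dvd.trans (mul_dvd_mul_right radical_mul_dvd _)))
      _ = radical (A * B * C) * (radical x * radical y * radical D * radical Z) := by ring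
      _ ∣ radical (A * B * C) * (radical X * radical Y * radical Z) := by
          rw [hXx, hYy]
          exact mul_dvd_mul_left _
            (mul_dvd_mul_right (hxy.radical_mul_radical_mul_radical_dvd hD.ne' hx.ne' hy.ne') _)

namespace IsProductRep

variable {X n b s : ℕ}

theorem base_pos (h : IsProductRep X n b s) : 0 < b := by
  obtain ⟨f, hf, -, -, ⟨i, rfl⟩, -⟩ := h
  exact hf i

theorem degree_pos (h : IsProductRep X n b s) : 0 < n := by
  obtain ⟨-, -, -, -, ⟨i, -⟩, -⟩ := h
  exact i.pos

theorem base_pow_le (h : IsProductRep X n b s) : b ^ n ≤ X := by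
  obtain ⟨f, -, rfl, hfb, -⟩ := h
  simpa using Finset.prod_le_prod' (s := Finset.univ) fun i _ => (hfb i).1

theorem radical_le (h : IsProductRep X n b s) : radical X ≤ (b + s) ^ (s + 1) := by
  have hb := h.base_pos
  obtain ⟨f, hf, rfl, hfb, -⟩ := h
  set V := Finset.univ.image f
  have hV : V ⊆ Finset.Icc b (b + s) := by
    simpa [V, Finset.image_subset_iff] using hfb
  have hVpos : 0 < ∏ v ∈ V, v :=
    Finset.prod_pos fun v hv => hb.trans_le (Finset.mem_Icc.1 (hV hv)).1
  have hdvd : radical (∏ i, f i) ∣ ∏ v ∈ V, v := by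
    refine (exists_dvd_pow_iff_radical_dvd (Finset.prod_pos fun i _ => hf i).ne').1 ⟨n, ?_⟩
    simpa using Finset.prod_dvd_prod_of_dvd (s := Finset.univ) f (fun _ => ∏ v ∈ V, v)
      fun i _ => Finset.dvd_prod_of_mem _ (Finset.mem_image_of_mem f (Finset.mem_univ i))
  calc radical (∏ i, f i) ≤ ∏ v ∈ V, v := Nat.le_of_dvd hVpos hdvd
    _ ≤ (b + s) ^ V.card := Finset.prod_le_pow_card _ _ _ fun v hv => (Finset.mem_Icc.1 (hV hv)).2
    _ ≤ (b + s) ^ (s + 1) := Nat.pow_le_pow_right (by omega) <|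
      (Finset.card_le_card hV).trans_eq (by rw [Nat.card_Icc]; omega)

end IsProductRep

theorem add_pow_succ_le_exp_mul_pow {b : ℝ} (hb : 0 < b) (s : ℕ) :
    (b + s) ^ (s + 1) ≤ exp (2 * s ^ 2 / b) * b ^ (s + 1) := by
  have hbs : b + s ≤ b * exp (s / b) := by
    calc b + s = b * (s / b + 1) := by field_simp; ring
      _ ≤ b * exp (s / b) := by gcongr; exact add_one_le_exp _
  have hexp : (s + 1 : ℝ) * (s / b) ≤ 2 * s ^ 2 / b := by
    have : (s : ℝ) ≤ s ^ 2 := by exact_mod_cast Nat.le_self_pow two_ne_zero s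
    rw [← mul_div_assoc]
    exact div_le_div_of_nonneg_right (by linarith) hb.le
  calc (b + s) ^ (s + 1) ≤ (b * exp (s / b)) ^ (s + 1) := by gcongr
    _ = exp ((s + 1 : ℝ) * (s / b)) * b ^ (s + 1) := by
      rw [mul_pow, ← exp_nat_mul]
      push_cast
      ring
    _ ≤ exp (2 * s ^ 2 / b) * b ^ (s + 1) := by gcongr

theorem IsProductRep.radical_le_exp_mul_rpow {X n b s : ℕ} (h : IsProductRep X n b s) :
    ((radical X : ℕ) : ℝ) ≤ exp (2 * s ^ 2 / b) * (X : ℝ) ^ ((1 + s : ℝ) / n) := by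
  have hb : (0 : ℝ) < b := by exact_mod_cast h.base_pos
  have hn : (n : ℝ) ≠ 0 := by exact_mod_cast h.degree_pos.ne'
  have hbX : (b : ℝ) ^ (s + 1) ≤ (X : ℝ) ^ ((1 + s : ℝ) / n) := by
    calc (b : ℝ) ^ (s + 1) = ((b : ℝ) ^ n) ^ ((1 + s : ℝ) / n) := by
          rw [← rpow_natCast, ← rpow_natCast, ← rpow_mul hb.le]
          congr 1
          field_simp
          push_cast
          ring
      _ ≤ (X : ℝ) ^ ((1 + s : ℝ) / n) := by
          gcongr
          exact_mod_cast h.base_pow_le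
  calc ((radical X : ℕ) : ℝ) ≤ ((b + s) ^ (s + 1) : ℕ) := by exact_mod_cast h.radical_le
    _ ≤ exp (2 * s ^ 2 / b) * (b : ℝ) ^ (s + 1) := by
      push_cast
      exact add_pow_succ_le_exp_mul_pow hb s
    _ ≤ exp (2 * s ^ 2 / b) * (X : ℝ) ^ ((1 + s : ℝ) / n) := by gcongr

theorem IsProductRep.radical_le_exp_mul_rpow_of_le {X n b s H : ℕ} {M : ℝ}
    (h : IsProductRep X n b s) (hM : (s : ℝ) ^ 2 / b ≤ M) (hXH : X ≤ H) :
    ((radical X : ℕ) : ℝ) ≤ exp (2 * M) * (H : ℝ) ^ ((1 + s : ℝ) / n) := by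
  calc ((radical X : ℕ) : ℝ) ≤ exp (2 * s ^ 2 / b) * (X : ℝ) ^ ((1 + s : ℝ) / n) :=
        h.radical_le_exp_mul_rpow
    _ ≤ exp (2 * M) * (H : ℝ) ^ ((1 + s : ℝ) / n) := by
        gcongr
        linarith [mul_div_assoc 2 ((s : ℝ) ^ 2) b]

theorem radical_mul_radical_mul_radical_le {X Y Z H nX nY nZ bX bY bZ sX sY sZ : ℕ} {M F : ℝ}
    (hrX : IsProductRep X nX bX sX) (hrY : IsProductRep Y nY bY sY)
    (hrZ : IsProductRep Z nZ bZ sZ) (hMX : (sX : ℝ) ^ 2 / bX ≤ M)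
    (hMY : (sY : ℝ) ^ 2 / bY ≤ M) (hMZ : (sZ : ℝ) ^ 2 / bZ ≤ M)
    (hF : (1 + (sX : ℝ)) / nX + (1 + (sY : ℝ)) / nY + (1 + (sZ : ℝ)) / nZ ≤ F)
    (hXH : X ≤ H) (hYH : Y ≤ H) (hZH : Z ≤ H) :
    ((radical X * radical Y * radical Z : ℕ) : ℝ) ≤ exp (6 * M) * (H : ℝ) ^ F := by
  have hH : (1 : ℝ) ≤ H := by
    exact_mod_cast (Nat.one_le_pow _ _ hrX.base_pos).trans (hrX.base_pow_le.trans hXH)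
  push_cast
  calc ((radical X : ℕ) : ℝ) * (radical Y : ℕ) * (radical Z : ℕ)
      ≤ (exp (2 * M) * (H : ℝ) ^ ((1 + sX : ℝ) / nX)) *
          (exp (2 * M) * (H : ℝ) ^ ((1 + sY : ℝ) / nY)) *
          (exp (2 * M) * (H : ℝ) ^ ((1 + sZ : ℝ) / nZ)) := by
        gcongr
        exacts [hrX.radical_le_exp_mul_rpow_of_le hMX hXH,
          hrY.radical_le_exp_mul_rpow_of_le hMY hYH, hrZ.radical_le_exp_mul_rpow_of_le hMZ hZH]
    _ = exp (6 * M) *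
          (H : ℝ) ^ ((1 + sX : ℝ) / nX + (1 + sY : ℝ) / nY + (1 + sZ : ℝ) / nZ) := by
        rw [rpow_add (by positivity), rpow_add (by positivity),
          show 6 * M = 2 * M + 2 * M + 2 * M by ring, exp_add, exp_add]
        ring
    _ ≤ exp (6 * M) * (H : ℝ) ^ F := by gcongr

theorem le_mul_rpow_of_abc {ε C₀ Q ρ : ℝ} (hC₀ : 0 < C₀) (hε : 0 ≤ ε)
    (habc : ∀ a b : ℕ, 0 < a → 0 < b → a.Coprime b →
      ((a : ℝ) + b) < C₀ * ((radical (a * b * (a + b)) : ℕ) : ℝ) ^ ((1 : ℝ) + ε))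
    {A B C X Y Z : ℕ} (hA : 0 < A) (hB : 0 < B) (hX : 0 < X) (hY : 0 < Y)
    (h : A * X + B * Y = C * Z)
    (hQ : ((X.gcd Y : ℕ) : ℝ) / ((radical (X.gcd Y) : ℕ) : ℝ) ≤ Q)
    (hρ : ((radical X * radical Y * radical Z : ℕ) : ℝ) ≤ ρ) :
    ((C * Z : ℕ) : ℝ) ≤
      C₀ * A * B * Q * (((radical (A * B * C) : ℕ) : ℝ) * ρ) ^ ((1 : ℝ) + ε) := by
  obtain ⟨a, b, ha, hb, hab, hH, hrad⟩ := exists_coprime_triple hA hB hX hY h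
  set D := X.gcd Y
  have hW : (1 : ℝ) ≤ (radical D : ℕ) := by exact_mod_cast Nat.radical_pos D
  set r : ℝ := ((radical (a * b * (a + b)) : ℕ) : ℝ)
  set W : ℝ := ((radical D : ℕ) : ℝ)
  have hQ0 : 0 ≤ Q := (by positivity : (0 : ℝ) ≤ D / W).trans hQ
  have hD : (D : ℝ) ≤ Q * W := by rwa [div_le_iff₀ (by positivity)] at hQ
  have hrW : r * W ≤ (radical (A * B * C) : ℕ) * ρ := by
    calc r * W ≤ ((radical (A * B * C) * (radical X * radical Y * radical Z) : ℕ) : ℝ) := by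
          simp only [r, W]
          exact_mod_cast Nat.le_of_dvd (by positivity) hrad
      _ ≤ (radical (A * B * C) : ℕ) * ρ := by
          rw [Nat.cast_mul]
          gcongr
  calc ((C * Z : ℕ) : ℝ) ≤ (a + b) * (A * B * D) := by exact_mod_cast hH
    _ ≤ C₀ * r ^ (1 + ε) * (A * B * (Q * W)) := by
        gcongr
        exact (habc a b ha hb hab).le
    _ = C₀ * A * B * Q * (r ^ (1 + ε) * W) := by ring
    _ ≤ C₀ * A * B * Q * (r * W) ^ (1 + ε) := by
        rw [mul_rpow (by positivity) (by positivity)]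
        gcongr
        exact self_le_rpow_of_one_le hW (by linarith)
    _ ≤ C₀ * A * B * Q * ((radical (A * B * C) : ℕ) * ρ) ^ (1 + ε) := by gcongr

theorem le_rpow_inv_of_le_mul_rpow_one_sub {x K δ : ℝ} (hx : 0 < x) (hδ : 0 < δ)
    (h : x ≤ K * x ^ (1 - δ)) : x ≤ K ^ δ⁻¹ := by
  have hK : x ^ δ ≤ K := by
    rw [rpow_sub hx, rpow_one, mul_div_assoc', le_div_iff₀ (by positivity), mul_comm K] at h
    exact le_of_mul_le_mul_left h hx
  calc x = (x ^ δ) ^ δ⁻¹ := by rw [← rpow_mul hx.le, mul_inv_cancel₀ hδ.ne', rpow_one]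
    _ ≤ K ^ δ⁻¹ := by gcongr

theorem stmt_0
    (habc : ∀ ε : ℝ, 0 < ε → ∃ C : ℝ, 0 < C ∧ ∀ a b : ℕ, 0 < a → 0 < b →
      Nat.Coprime a b → ((a : ℝ) + b) < C * (rad (a * b * (a + b)) : ℝ) ^ ((1 : ℝ) + ε))
    (A B C : ℕ) (hA : 0 < A) (hB : 0 < B) (hC : 0 < C)
    (F Q M : ℝ) (hF : F < 1) :
    {T : ℕ × ℕ × ℕ |
      0 < T.1 ∧ 0 < T.2.1 ∧ 0 < T.2.2 ∧
      A * T.1 + B * T.2.1 = C * T.2.2 ∧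
      ((Nat.gcd T.1 T.2.1 : ℝ) / (rad (Nat.gcd T.1 T.2.1) : ℝ)) ≤ Q ∧
      ∃ nX nY nZ bX bY bZ sX sY sZ : ℕ,
        IsProductRep T.1 nX bX sX ∧ IsProductRep T.2.1 nY bY sY ∧
        IsProductRep T.2.2 nZ bZ sZ ∧
        ((sX : ℝ) ^ 2 / bX ≤ M) ∧ ((sY : ℝ) ^ 2 / bY ≤ M) ∧ ((sZ : ℝ) ^ 2 / bZ ≤ M) ∧
        ((1 + (sX : ℝ)) / nX + (1 + (sY : ℝ)) / nY + (1 + (sZ : ℝ)) / nZ ≤ F)}.Finite := by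
  rw [rad_eq_radical] at habc ⊢
  obtain ⟨C₀, hC₀, habc⟩ := habc (1 - F) (by linarith)
  set K := C₀ * A * B * Q *
    (((radical (A * B * C) : ℕ) : ℝ) * exp (6 * M)) ^ ((1 : ℝ) + (1 - F))
  set N := ⌈K ^ ((1 - F) ^ 2)⁻¹⌉₊
  refine (Set.finite_Icc 0 (N, N, N)).subset ?_
  rintro ⟨X, Y, Z⟩
    ⟨hX, hY, hZ, hsum, hQ, _, _, _, _, _, _, _, _, _, hrX, hrY, hrZ, hMX, hMY, hMZ, hF⟩
  dsimp only at hX hY hZ hsum hQ hrX hrY hrZ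
  have hXH : X ≤ C * Z := hsum ▸ (Nat.le_mul_of_pos_left X hA).trans (Nat.le_add_right _ _)
  have hYH : Y ≤ C * Z := hsum ▸ (Nat.le_mul_of_pos_left Y hB).trans (Nat.le_add_left _ _)
  have hZH : Z ≤ C * Z := Nat.le_mul_of_pos_left Z hC
  have hH := le_mul_rpow_of_abc hC₀ (by linarith) habc hA hB hX hY hsum hQ
    (radical_mul_radical_mul_radical_le hrX hrY hrZ hMX hMY hMZ hF hXH hYH hZH)
  have hHK : ((C * Z : ℕ) : ℝ) ≤ K * ((C * Z : ℕ) : ℝ) ^ (1 - (1 - F) ^ 2) := by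
    refine hH.trans_eq ?_
    rw [← mul_assoc, mul_rpow (by positivity) (by positivity), ← rpow_mul (by positivity),
      show 1 - (1 - F) ^ 2 = F * (1 + (1 - F)) by ring]
    ring
  have hHN : C * Z ≤ N := by
    exact_mod_cast
      (le_rpow_inv_of_le_mul_rpow_one_sub (by positivity) (by nlinarith) hHK).trans (Nat.le_ceil _)
  exact ⟨zero_le, by simp only [Prod.mk_le_mk]; omega⟩
end

section
/- Let X be a positive integer admitting a representation as a product of degree d with base b and spread s. Then rad(X) ≤ (b + s)^{s+1}. -/
/-
Every prime factor of `X = x₁ ⋯ x_d` divides some `xᵢ`, and every `xᵢ` lies in the interval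
`[b, b + s]`. Hence `rad X` divides the product of `rad m` over the `s + 1` integers `m` of that
interval, and each factor satisfies `rad m ≤ m ≤ b + s`.
-/

lemma rad_pos (n : ℕ) : 0 < rad n :=
  Finset.prod_pos fun _ hp => (Nat.prime_of_mem_primeFactors hp).pos

lemma rad_le_self {n : ℕ} (hn : 0 < n) : rad n ≤ n :=
  Nat.le_of_dvd hn (Nat.prod_primeFactors_dvd n)

lemma rad_prod_dvd_prod_rad_of_mapsTo {ι : Type*} {s : Finset ι} {f : ι → ℕ} {t : Finset ℕ}
    (hf : ∀ i ∈ s, f i ∈ t) : rad (∏ i ∈ s, f i) ∣ ∏ m ∈ t, rad m := by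
  refine Finset.prod_primes_dvd _ (fun p hp => (Nat.prime_of_mem_primeFactors hp).prime) ?_
  intro p hp
  obtain ⟨hp_prime, hp_dvd, hprod⟩ := Nat.mem_primeFactors.mp hp
  obtain ⟨i, hi, hpi⟩ := hp_prime.prime.exists_mem_finset_dvd hp_dvd
  have hfi : f i ≠ 0 := fun h0 => hprod (Finset.prod_eq_zero hi h0)
  have hp_rad : p ∣ rad (f i) :=
    Finset.dvd_prod_of_mem _ (Nat.mem_primeFactors.mpr ⟨hp_prime, hpi, hfi⟩)
  exact hp_rad.trans (Finset.dvd_prod_of_mem _ (hf i hi))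

lemma prod_rad_Icc_le {b : ℕ} (hb : 0 < b) (s : ℕ) :
    ∏ m ∈ Finset.Icc b (b + s), rad m ≤ (b + s) ^ (s + 1) := by
  have hcard : (Finset.Icc b (b + s)).card = s + 1 := by simp only [Nat.card_Icc]; omega
  rw [← hcard]
  refine Finset.prod_le_pow_card _ _ _ fun m hm => ?_
  obtain ⟨hbm, hms⟩ := Finset.mem_Icc.mp hm
  exact (rad_le_self (hb.trans_le hbm)).trans hms

theorem stmt_4_general (X d b s : ℕ) (hrep : IsProductRep X d b s) :
    rad X ≤ (b + s) ^ (s + 1) := by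
  obtain ⟨f, hpos, rfl, hbound, ⟨i₀, hi₀⟩, -⟩ := hrep
  have hb : 0 < b := hi₀ ▸ hpos i₀
  have hdvd : rad (∏ i, f i) ∣ ∏ m ∈ Finset.Icc b (b + s), rad m :=
    rad_prod_dvd_prod_rad_of_mapsTo fun i _ => Finset.mem_Icc.mpr (hbound i)
  exact (Nat.le_of_dvd (Finset.prod_pos fun m _ => rad_pos m) hdvd).trans (prod_rad_Icc_le hb s)

theorem stmt_4 (X d b s : ℕ) (hX : 0 < X) (hrep : IsProductRep X d b s) :
    rad X ≤ (b + s) ^ (s + 1) :=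
  stmt_4_general X d b s hrep
end

section
/- Let n and m be positive integers such that 3 does not divide n, 3 does not divide m, and gcd(n, m) ≤ 2. Then there are infinitely many triples (x^n, y^m, z^3) of positive integer powers satisfying x^n + y^m = z^3 and gcd(x^n, y^m) ≠ min(x^n, y^m); that is, the set of triples (X, Y, Z) of positive integers with X = x^n, Y = y^m, Z = z^3 for some positive integers x, y, z, such that X + Y = Z and gcd(X, Y) ≠ min(X, Y), is infinite. -/
/-!
Since `2² + 11² = 5³` and `gcd(4, 121) = 1 ≠ 4`, every multiple `s • (4, 121, 125)` is a
non-maxgcd solution of `X + Y = Z`. Taking `s = 2^e 11^f` with `e ≡ 0 (mod 3m)`, `e ≡ -2 (mod n)`,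
`f ≡ 0 (mod 3n)`, `f ≡ -2 (mod m)` makes the three terms an `n`-th power, an `m`-th power and a
cube; these congruences are solvable because `gcd(n, 3m) = gcd(n, m)` divides `2` when `3 ∤ n`.
Scaling such a triple by `c^(3nm)` for `c = 1, 2, …` then gives infinitely many.
-/

theorem Nat.exists_dvd_mul_add_of_gcd_dvd {u v w : ℕ} (hu : u ≠ 0) (h : Nat.gcd u v ∣ w) :
    ∃ k, u ∣ v * k + w := by
  obtain ⟨c, rfl⟩ := h
  -- Bézout `gcd u v = u a + v b`: any `k ≡ -b c (mod u)` works.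
  set r : ℤ := -(Nat.gcdB u v * c)
  have hr : 0 ≤ r % u := Int.emod_nonneg _ (by exact_mod_cast hu)
  refine ⟨(r % u).toNat, ?_⟩
  rw [← Int.natCast_dvd_natCast]
  push_cast [Int.toNat_of_nonneg hr]
  rw [Nat.gcd_eq_gcd_ab, Int.emod_def]
  exact ⟨Nat.gcdA u v * c - v * (r / u), by ring⟩

theorem Nat.gcd_mul_left_ne_min_mul_left {d a b : ℕ} (hd : d ≠ 0) (h : Nat.gcd a b ≠ min a b) :
    Nat.gcd (d * a) (d * b) ≠ min (d * a) (d * b) := by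
  rw [Nat.gcd_mul_left, min_mul_mul_left]
  exact fun h' => h (Nat.eq_of_mul_eq_mul_left (Nat.pos_of_ne_zero hd) h')

def nonMaxgcdPowerTriples (n m : ℕ) : Set (ℕ × ℕ × ℕ) :=
  {T | (∃ x y z : ℕ, 0 < x ∧ 0 < y ∧ 0 < z ∧
      T.1 = x ^ n ∧ T.2.1 = y ^ m ∧ T.2.2 = z ^ 3) ∧
      T.1 + T.2.1 = T.2.2 ∧
      Nat.gcd T.1 T.2.1 ≠ min T.1 T.2.1}

namespace nonMaxgcdPowerTriples

variable {n m : ℕ}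

theorem smul_mem {T : ℕ × ℕ × ℕ} (hT : T ∈ nonMaxgcdPowerTriples n m) {c : ℕ} (hc : 0 < c) :
    c ^ (3 * n * m) • T ∈ nonMaxgcdPowerTriples n m := by
  obtain ⟨⟨x, y, z, hx, hy, hz, hX, hY, hZ⟩, hsum, hgcd⟩ := hT
  refine ⟨⟨c ^ (3 * m) * x, c ^ (3 * n) * y, c ^ (n * m) * z, by positivity, by positivity,
    by positivity, ?_, ?_, ?_⟩, ?_, ?_⟩ <;> simp only [Prod.smul_fst, Prod.smul_snd, smul_eq_mul]
  · rw [hX]; ring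
  · rw [hY]; ring
  · rw [hZ]; ring
  · rw [← mul_add, hsum]
  · exact Nat.gcd_mul_left_ne_min_mul_left (by positivity) hgcd

theorem infinite_of_nonempty (hn : 0 < n) (hm : 0 < m) (h : (nonMaxgcdPowerTriples n m).Nonempty) :
    (nonMaxgcdPowerTriples n m).Infinite := by
  obtain ⟨T, hT⟩ := h
  obtain ⟨⟨x, -, -, hx, -, -, hX, -, -⟩, -, -⟩ := id hT
  have hX0 : 0 < T.1 := hX ▸ pow_pos hx n
  refine Set.infinite_of_injective_forall_mem (f := fun t : ℕ => (t + 1) ^ (3 * n * m) • T)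
    (fun a b hab => ?_) (fun t => smul_mem hT t.succ_pos)
  have h1 := congrArg Prod.fst hab
  simp only [Prod.smul_fst, smul_eq_mul] at h1
  have := Nat.pow_left_injective (by positivity) (Nat.eq_of_mul_eq_mul_right hX0 h1)
  omega

theorem two_pow_eleven_pow_mem {e f : ℕ} (he : 3 * m ∣ e) (he' : n ∣ e + 2)
    (hf : 3 * n ∣ f) (hf' : m ∣ f + 2) :
    (2 ^ e * 11 ^ f * 4, 2 ^ e * 11 ^ f * 121, 2 ^ e * 11 ^ f * 125) ∈
      nonMaxgcdPowerTriples n m := by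
  obtain ⟨a, rfl⟩ := he
  obtain ⟨b, rfl⟩ := hf
  obtain ⟨a', ha'⟩ := he'
  obtain ⟨b', hb'⟩ := hf'
  refine ⟨⟨2 ^ a' * 11 ^ (3 * b), 2 ^ (3 * a) * 11 ^ b', 5 * 2 ^ (m * a) * 11 ^ (n * b),
    by positivity, by positivity, by positivity, ?_, ?_, ?_⟩, by ring, ?_⟩ <;> simp only
  · rw [mul_pow, ← pow_mul, ← pow_mul, mul_comm a', ← ha', pow_add]; ring
  · rw [mul_pow, ← pow_mul, ← pow_mul, mul_comm b', ← hb', pow_add]; ring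
  · rw [mul_pow, mul_pow, ← pow_mul, ← pow_mul]; ring
  · exact Nat.gcd_mul_left_ne_min_mul_left (by positivity) (by norm_num)

end nonMaxgcdPowerTriples

theorem exists_three_mul_dvd_and_dvd_add_two {n m : ℕ} (hn : n ≠ 0) (h3n : ¬ 3 ∣ n)
    (hgcd : Nat.gcd n m ∣ 2) : ∃ e, 3 * m ∣ e ∧ n ∣ e + 2 := by
  have hcop : Nat.Coprime 3 n := (Nat.Prime.coprime_iff_not_dvd Nat.prime_three).mpr h3n
  obtain ⟨k, hk⟩ := Nat.exists_dvd_mul_add_of_gcd_dvd (v := 3 * m) (w := 2) hn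
    (by rwa [Nat.Coprime.gcd_mul_left_cancel_right m hcop])
  exact ⟨3 * m * k, dvd_mul_right _ _, hk⟩

theorem stmt_6 (n m : ℕ) (hn : 0 < n) (hm : 0 < m)
    (h3n : ¬ (3 ∣ n)) (h3m : ¬ (3 ∣ m)) (hgcd : Nat.gcd n m ≤ 2) :
    {T : ℕ × ℕ × ℕ | (∃ x y z : ℕ, 0 < x ∧ 0 < y ∧ 0 < z ∧
      T.1 = x ^ n ∧ T.2.1 = y ^ m ∧ T.2.2 = z ^ 3) ∧
      T.1 + T.2.1 = T.2.2 ∧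
      Nat.gcd T.1 T.2.1 ≠ min T.1 T.2.1}.Infinite := by
  have hgcd_dvd : Nat.gcd n m ∣ 2 := by
    have := Nat.gcd_pos_of_pos_left m hn
    interval_cases Nat.gcd n m <;> norm_num
  obtain ⟨e, he, he'⟩ := exists_three_mul_dvd_and_dvd_add_two hn.ne' h3n hgcd_dvd
  obtain ⟨f, hf, hf'⟩ :=
    exists_three_mul_dvd_and_dvd_add_two hm.ne' h3m (Nat.gcd_comm n m ▸ hgcd_dvd)
  exact nonMaxgcdPowerTriples.infinite_of_nonempty hn hm
    ⟨_, nonMaxgcdPowerTriples.two_pow_eleven_pow_mem he he' hf hf'⟩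
end

section
/- For every natural number S, the set { (s₁+1)/n₁ + (s₂+1)/n₂ + (s₃+1)/n₃ : n₁, n₂, n₃ positive integers, s₁, s₂, s₃ natural numbers with s₁, s₂, s₃ ≤ S, and (s₁+1)/n₁ + (s₂+1)/n₂ + (s₃+1)/n₃ < 1 } has a maximum element; that is, there is an element of this set that is greater than or equal to every element of the set. -/
/-!
In the reversed order the fractions `(s + 1) / n` with `s ≤ S` form a well-founded set: for each
numerator they decrease to `0` as `n` grows. Sums of well-founded sets in an ordered cancellative
monoid are well-founded, so the three-term sums below `1` form a well-founded set for the reversed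
order, and its least element there is the required maximum.
-/

open Set OrderDual Pointwise

def boundedNumeratorFractions (α : Type*) [DivisionRing α] (S : ℕ) : Set α :=
  {q | ∃ n s : ℕ, 0 < n ∧ s ≤ S ∧ q = ((s : α) + 1) / n}

lemma exists_max_of_isWF_ofDual_preimage {α : Type*} [LinearOrder α] {T : Set α}
    (hT : (ofDual ⁻¹' T).IsWF) (hne : T.Nonempty) : ∃ q ∈ T, ∀ r ∈ T, r ≤ q :=
  ⟨ofDual (hT.min hne), hT.min_mem hne, fun r hr => hT.min_le hne (a := toDual r) hr⟩

section

variable {α : Type*} [Field α] [LinearOrder α] [IsStrictOrderedRing α]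

lemma isWF_range_toDual_div_succ {a : α} (ha : 0 ≤ a) :
    (range fun n : ℕ => toDual (a / (n + 1))).IsWF := by
  have hmono : Monotone fun n : ℕ => toDual (a / (n + 1)) := fun m n hmn =>
    toDual_le_toDual.2 (div_le_div_of_nonneg_left ha (by positivity) (by gcongr))
  rw [← image_univ]
  exact ((isPWO_of_wellQuasiOrderedLE univ).image_of_monotone hmono).isWF

lemma isWF_ofDual_preimage_boundedNumeratorFractions (S : ℕ) :
    (ofDual ⁻¹' boundedNumeratorFractions α S).IsWF := by
  refine ((Finset.range (S + 1)).isWF_sup.2 fun s _ =>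
    isWF_range_toDual_div_succ (a := (s : α) + 1) (by positivity)).mono ?_
  rintro x ⟨n, s, hn, hs, hx⟩
  obtain ⟨m, rfl⟩ := Nat.exists_eq_add_one_of_ne_zero hn.ne'
  rw [Finset.sup_set_eq_biUnion, mem_iUnion₂]
  exact ⟨s, Finset.mem_range_succ_iff.2 hs, m, by rw [← toDual_ofDual x, hx, Nat.cast_succ]⟩

end

theorem stmt_10 (S : ℕ) :
    ∃ q ∈ {q : ℚ | ∃ n₁ n₂ n₃ s₁ s₂ s₃ : ℕ, 0 < n₁ ∧ 0 < n₂ ∧ 0 < n₃ ∧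
        s₁ ≤ S ∧ s₂ ≤ S ∧ s₃ ≤ S ∧
        q = ((s₁ : ℚ) + 1) / n₁ + ((s₂ : ℚ) + 1) / n₂ + ((s₃ : ℚ) + 1) / n₃ ∧ q < 1},
      ∀ r ∈ {q : ℚ | ∃ n₁ n₂ n₃ s₁ s₂ s₃ : ℕ, 0 < n₁ ∧ 0 < n₂ ∧ 0 < n₃ ∧
        s₁ ≤ S ∧ s₂ ≤ S ∧ s₃ ≤ S ∧
        q = ((s₁ : ℚ) + 1) / n₁ + ((s₂ : ℚ) + 1) / n₂ + ((s₃ : ℚ) + 1) / n₃ ∧ q < 1},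
      r ≤ q := by
  refine exists_max_of_isWF_ofDual_preimage ?_ ⟨3 / 4, 4, 4, 4, 0, 0, 0, by norm_num⟩
  have hV := isWF_ofDual_preimage_boundedNumeratorFractions (α := ℚ) S
  refine ((hV.add hV).add hV).mono ?_
  rintro x ⟨n₁, n₂, n₃, s₁, s₂, s₃, hn₁, hn₂, hn₃, hs₁, hs₂, hs₃, hx, -⟩
  rw [← toDual_ofDual x, hx]
  exact add_mem_add (add_mem_add ⟨n₁, s₁, hn₁, hs₁, rfl⟩ ⟨n₂, s₂, hn₂, hs₂, rfl⟩)
    ⟨n₃, s₃, hn₃, hs₃, rfl⟩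
end
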